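/- arXiv:2204.11047 — 2 statements merged into one kernel-verified Lean document; each statement's English description precedes it below -/
import Mathlib

section
/- For every a ∈ Cℓ(1,2), a·ā·(N(a) - 2T(a)e₇) = P(a), where P(a) = N(a)² + 4T(a)². -/
/-- The Clifford algebra `Cℓ(1,2)` as an 8-dimensional real vector space with
coordinates in the basis `e₀ = 1, e₁ = i₁, e₂ = i₂, e₃ = i₁i₂, e₄ = i₃,
e₅ = i₁i₃, e₆ = i₂i₃, e₇ = i₁i₂i₃`, where `i₁² = 1`, `i₂² = i₃² = -1` and the
generators anticommute. -/
@[ext] structure Cl12 where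
  x0 : ℝ
  x1 : ℝ
  x2 : ℝ
  x3 : ℝ
  x4 : ℝ
  x5 : ℝ
  x6 : ℝ
  x7 : ℝ

namespace Cl12

instance : Zero Cl12 := ⟨⟨0,0,0,0,0,0,0,0⟩⟩
instance : One Cl12 := ⟨⟨1,0,0,0,0,0,0,0⟩⟩
instance : Add Cl12 :=
  ⟨fun a b => ⟨a.x0+b.x0, a.x1+b.x1, a.x2+b.x2, a.x3+b.x3,
               a.x4+b.x4, a.x5+b.x5, a.x6+b.x6, a.x7+b.x7⟩⟩
instance : Neg Cl12 := ⟨fun a => ⟨-a.x0,-a.x1,-a.x2,-a.x3,-a.x4,-a.x5,-a.x6,-a.x7⟩⟩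
instance : Sub Cl12 := ⟨fun a b => a + -b⟩
instance : SMul ℝ Cl12 :=
  ⟨fun r a => ⟨r*a.x0, r*a.x1, r*a.x2, r*a.x3, r*a.x4, r*a.x5, r*a.x6, r*a.x7⟩⟩

/-- Multiplication in `Cℓ(1,2)`, from the multiplication table of the basis. -/
instance : Mul Cl12 := ⟨fun a b =>
  ⟨a.x0*b.x0 + a.x1*b.x1 - a.x2*b.x2 + a.x3*b.x3 - a.x4*b.x4 + a.x5*b.x5 - a.x6*b.x6 - a.x7*b.x7,
   a.x0*b.x1 + a.x1*b.x0 + a.x2*b.x3 - a.x3*b.x2 + a.x4*b.x5 - a.x5*b.x4 - a.x6*b.x7 - a.x7*b.x6,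
   a.x0*b.x2 + a.x1*b.x3 + a.x2*b.x0 - a.x3*b.x1 + a.x4*b.x6 - a.x5*b.x7 - a.x6*b.x4 - a.x7*b.x5,
   a.x0*b.x3 + a.x1*b.x2 - a.x2*b.x1 + a.x3*b.x0 - a.x4*b.x7 + a.x5*b.x6 - a.x6*b.x5 - a.x7*b.x4,
   a.x0*b.x4 + a.x1*b.x5 - a.x2*b.x6 + a.x3*b.x7 + a.x4*b.x0 - a.x5*b.x1 + a.x6*b.x2 + a.x7*b.x3,
   a.x0*b.x5 + a.x1*b.x4 + a.x2*b.x7 - a.x3*b.x6 - a.x4*b.x1 + a.x5*b.x0 + a.x6*b.x3 + a.x7*b.x2,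
   a.x0*b.x6 + a.x1*b.x7 + a.x2*b.x4 - a.x3*b.x5 - a.x4*b.x2 + a.x5*b.x3 + a.x6*b.x0 + a.x7*b.x1,
   a.x0*b.x7 + a.x1*b.x6 - a.x2*b.x5 + a.x3*b.x4 + a.x4*b.x3 - a.x5*b.x2 + a.x6*b.x1 + a.x7*b.x0⟩⟩

/-- The Clifford conjugate `ā`. -/
def conj (a : Cl12) : Cl12 := ⟨a.x0, -a.x1, -a.x2, -a.x3, -a.x4, -a.x5, -a.x6, a.x7⟩

/-- The "prime" involution `a'`. -/
def prime (a : Cl12) : Cl12 := ⟨a.x0, a.x1, -a.x2, a.x3, -a.x4, a.x5, -a.x6, -a.x7⟩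

/-- `N(a) = a₀² - a₁² + a₂² - a₃² + a₄² - a₅² + a₆² - a₇²`. -/
def N (a : Cl12) : ℝ := a.x0^2 - a.x1^2 + a.x2^2 - a.x3^2 + a.x4^2 - a.x5^2 + a.x6^2 - a.x7^2

/-- `T(a) = a₀a₇ + a₂a₅ - a₁a₆ - a₃a₄`. -/
def T (a : Cl12) : ℝ := a.x0*a.x7 + a.x2*a.x5 - a.x1*a.x6 - a.x3*a.x4

/-- `P(a) = N(a)² + 4T(a)²`. -/
def P (a : Cl12) : ℝ := N a ^ 2 + 4 * T a ^ 2

/-- The basis element `e₇ = i₁i₂i₃`. -/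
def e7 : Cl12 := ⟨0,0,0,0,0,0,0,1⟩

/-- The real scalar `r` as an element of `Cℓ(1,2)`. -/
def ofReal (r : ℝ) : Cl12 := ⟨r,0,0,0,0,0,0,0⟩

/-- The "real part" `Cre(a) = a₀ + a₇e₇`. -/
def Cre (a : Cl12) : Cl12 := ⟨a.x0, 0, 0, 0, 0, 0, 0, a.x7⟩

end Cl12


namespace Cl12
lemma mul_def (a b : Cl12) : a * b =
  ⟨a.x0*b.x0 + a.x1*b.x1 - a.x2*b.x2 + a.x3*b.x3 - a.x4*b.x4 + a.x5*b.x5 - a.x6*b.x6 - a.x7*b.x7,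
   a.x0*b.x1 + a.x1*b.x0 + a.x2*b.x3 - a.x3*b.x2 + a.x4*b.x5 - a.x5*b.x4 - a.x6*b.x7 - a.x7*b.x6,
   a.x0*b.x2 + a.x1*b.x3 + a.x2*b.x0 - a.x3*b.x1 + a.x4*b.x6 - a.x5*b.x7 - a.x6*b.x4 - a.x7*b.x5,
   a.x0*b.x3 + a.x1*b.x2 - a.x2*b.x1 + a.x3*b.x0 - a.x4*b.x7 + a.x5*b.x6 - a.x6*b.x5 - a.x7*b.x4,
   a.x0*b.x4 + a.x1*b.x5 - a.x2*b.x6 + a.x3*b.x7 + a.x4*b.x0 - a.x5*b.x1 + a.x6*b.x2 + a.x7*b.x3,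
   a.x0*b.x5 + a.x1*b.x4 + a.x2*b.x7 - a.x3*b.x6 - a.x4*b.x1 + a.x5*b.x0 + a.x6*b.x3 + a.x7*b.x2,
   a.x0*b.x6 + a.x1*b.x7 + a.x2*b.x4 - a.x3*b.x5 - a.x4*b.x2 + a.x5*b.x3 + a.x6*b.x0 + a.x7*b.x1,
   a.x0*b.x7 + a.x1*b.x6 - a.x2*b.x5 + a.x3*b.x4 + a.x4*b.x3 - a.x5*b.x2 + a.x6*b.x1 + a.x7*b.x0⟩ := rfl

lemma neg_def (a : Cl12) : -a = ⟨-a.x0,-a.x1,-a.x2,-a.x3,-a.x4,-a.x5,-a.x6,-a.x7⟩ := rfl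

lemma sub_def (a b : Cl12) : a - b =
  ⟨a.x0-b.x0, a.x1-b.x1, a.x2-b.x2, a.x3-b.x3, a.x4-b.x4, a.x5-b.x5, a.x6-b.x6, a.x7-b.x7⟩ := by
  show a + -b = _
  rw [neg_def]
  show Cl12.mk _ _ _ _ _ _ _ _ = _
  simp only [Cl12.mk.injEq]
  exact ⟨by ring, by ring, by ring, by ring, by ring, by ring, by ring, by ring⟩

lemma smul_def (r : ℝ) (a : Cl12) : r • a =
  ⟨r*a.x0, r*a.x1, r*a.x2, r*a.x3, r*a.x4, r*a.x5, r*a.x6, r*a.x7⟩ := rfl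
end Cl12

/-- For every `a ∈ Cℓ(1,2)`, `a·ā·(N(a) - 2T(a)e₇) = P(a)`. -/
theorem mul_conj_mul (a : Cl12) :
    a * Cl12.conj a * (Cl12.ofReal (Cl12.N a) - (2 * Cl12.T a) • Cl12.e7) =
      Cl12.ofReal (Cl12.P a) := by
  simp only [Cl12.mul_def, Cl12.sub_def, Cl12.smul_def, Cl12.conj, Cl12.ofReal, Cl12.e7,
    Cl12.N, Cl12.T, Cl12.P, Cl12.mk.injEq]
  refine ⟨by ring, by ring, by ring, by ring, by ring, by ring, by ring, by ring⟩
end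

section
/- For every a ∈ Cℓ(1,2), there is a unique x ∈ Cℓ(1,2) satisfying axa = a, xax = x, (ax)' = ax, and (xa)' = xa (the Moore–Penrose inverse of a in Cℓ(1,2)). -/
section Work
set_option maxHeartbeats 1000000
namespace Cl12

lemma mul_x0 (a b : Cl12) : (a*b).x0 = a.x0*b.x0 + a.x1*b.x1 - a.x2*b.x2 + a.x3*b.x3 - a.x4*b.x4 + a.x5*b.x5 - a.x6*b.x6 - a.x7*b.x7 := rfl
lemma mul_x1 (a b : Cl12) : (a*b).x1 = a.x0*b.x1 + a.x1*b.x0 + a.x2*b.x3 - a.x3*b.x2 + a.x4*b.x5 - a.x5*b.x4 - a.x6*b.x7 - a.x7*b.x6 := rfl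
lemma mul_x2 (a b : Cl12) : (a*b).x2 = a.x0*b.x2 + a.x1*b.x3 + a.x2*b.x0 - a.x3*b.x1 + a.x4*b.x6 - a.x5*b.x7 - a.x6*b.x4 - a.x7*b.x5 := rfl
lemma mul_x3 (a b : Cl12) : (a*b).x3 = a.x0*b.x3 + a.x1*b.x2 - a.x2*b.x1 + a.x3*b.x0 - a.x4*b.x7 + a.x5*b.x6 - a.x6*b.x5 - a.x7*b.x4 := rfl
lemma mul_x4 (a b : Cl12) : (a*b).x4 = a.x0*b.x4 + a.x1*b.x5 - a.x2*b.x6 + a.x3*b.x7 + a.x4*b.x0 - a.x5*b.x1 + a.x6*b.x2 + a.x7*b.x3 := rfl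
lemma mul_x5 (a b : Cl12) : (a*b).x5 = a.x0*b.x5 + a.x1*b.x4 + a.x2*b.x7 - a.x3*b.x6 - a.x4*b.x1 + a.x5*b.x0 + a.x6*b.x3 + a.x7*b.x2 := rfl
lemma mul_x6 (a b : Cl12) : (a*b).x6 = a.x0*b.x6 + a.x1*b.x7 + a.x2*b.x4 - a.x3*b.x5 - a.x4*b.x2 + a.x5*b.x3 + a.x6*b.x0 + a.x7*b.x1 := rfl
lemma mul_x7 (a b : Cl12) : (a*b).x7 = a.x0*b.x7 + a.x1*b.x6 - a.x2*b.x5 + a.x3*b.x4 + a.x4*b.x3 - a.x5*b.x2 + a.x6*b.x1 + a.x7*b.x0 := rfl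

lemma smul_x0 (r : ℝ) (a : Cl12) : (r • a).x0 = r * a.x0 := rfl
lemma smul_x1 (r : ℝ) (a : Cl12) : (r • a).x1 = r * a.x1 := rfl
lemma smul_x2 (r : ℝ) (a : Cl12) : (r • a).x2 = r * a.x2 := rfl
lemma smul_x3 (r : ℝ) (a : Cl12) : (r • a).x3 = r * a.x3 := rfl
lemma smul_x4 (r : ℝ) (a : Cl12) : (r • a).x4 = r * a.x4 := rfl
lemma smul_x5 (r : ℝ) (a : Cl12) : (r • a).x5 = r * a.x5 := rfl
lemma smul_x6 (r : ℝ) (a : Cl12) : (r • a).x6 = r * a.x6 := rfl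
lemma smul_x7 (r : ℝ) (a : Cl12) : (r • a).x7 = r * a.x7 := rfl

lemma zero_def : (0 : Cl12) = ⟨0,0,0,0,0,0,0,0⟩ := rfl
lemma one_def : (1 : Cl12) = ⟨1,0,0,0,0,0,0,0⟩ := rfl

attribute [local simp] mul_x0 mul_x1 mul_x2 mul_x3 mul_x4 mul_x5 mul_x6 mul_x7
  smul_x0 smul_x1 smul_x2 smul_x3 smul_x4 smul_x5 smul_x6 smul_x7 prime conj zero_def one_def

lemma mul_assoc' (a b c : Cl12) : a * b * c = a * (b * c) := by
  ext <;> simp <;> ring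

lemma prime_mul (a b : Cl12) : prime (a * b) = prime b * prime a := by
  ext <;> simp <;> ring

lemma prime_smul (r : ℝ) (a : Cl12) : prime (r • a) = r • prime a := by
  ext <;> simp

lemma prime_one : prime (1 : Cl12) = 1 := by ext <;> simp

lemma prime_prime (a : Cl12) : prime (prime a) = a := by ext <;> simp

lemma one_mul' (a : Cl12) : 1 * a = a := by ext <;> simp
lemma mul_one' (a : Cl12) : a * 1 = a := by ext <;> simp
lemma zero_mul' (a : Cl12) : 0 * a = 0 := by ext <;> simp
lemma mul_zero' (a : Cl12) : a * 0 = 0 := by ext <;> simp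
lemma prime_zero : prime (0 : Cl12) = 0 := by ext <;> simp

lemma smul_mul (r : ℝ) (a b : Cl12) : (r • a) * b = r • (a * b) := by
  ext <;> simp <;> ring
lemma mul_smul' (r : ℝ) (a b : Cl12) : a * (r • b) = r • (a * b) := by
  ext <;> simp <;> ring
lemma smul_smul' (r t : ℝ) (a : Cl12) : r • (t • a) = (r * t) • a := by
  ext <;> simp <;> ring
lemma one_smul' (a : Cl12) : (1 : ℝ) • a = a := by ext <;> simp

/-- central "complex numbers" r + t e₇ -/
def cc (r t : ℝ) : Cl12 := ⟨r,0,0,0,0,0,0,t⟩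

lemma cc_comm (r t : ℝ) (a : Cl12) : cc r t * a = a * cc r t := by
  ext <;> simp [cc] <;> ring

lemma cc_mul_cc (r t r' t' : ℝ) : cc r t * cc r' t' = cc (r*r' - t*t') (r*t' + t*r') := by
  ext <;> simp [cc] <;> ring

lemma mul_conj (a : Cl12) : a * conj a = cc (N a) (2 * T a) := by
  ext <;> simp [cc, N, T] <;> ring

lemma conj_mul (a : Cl12) : conj a * a = cc (N a) (2 * T a) := by
  ext <;> simp [cc, N, T] <;> ring

/-- squared Frobenius-type norm -/
def s (a : Cl12) : ℝ :=
  a.x0^2 + a.x1^2 + a.x2^2 + a.x3^2 + a.x4^2 + a.x5^2 + a.x6^2 + a.x7^2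

lemma key (a : Cl12) (hN : N a = 0) (hT : T a = 0) :
    a * prime a * a = (2 * s a) • a := by
  rw [N] at hN; rw [T] at hT
  ext <;> simp [s]
  · linear_combination (-a.x0) * hN + (-2*a.x7) * hT
  · linear_combination (a.x1) * hN + (2*a.x6) * hT
  · linear_combination (-a.x2) * hN + (-2*a.x5) * hT
  · linear_combination (a.x3) * hN + (2*a.x4) * hT
  · linear_combination (-a.x4) * hN + (2*a.x3) * hT
  · linear_combination (a.x5) * hN + (-2*a.x2) * hT
  · linear_combination (-a.x6) * hN + (2*a.x1) * hT
  · linear_combination (a.x7) * hN + (-2*a.x0) * hT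

lemma mp_unique (a x y : Cl12)
    (hx1 : a * x * a = a) (hx2 : x * a * x = x)
    (hx3 : prime (a * x) = a * x) (hx4 : prime (x * a) = x * a)
    (hy1 : a * y * a = a) (hy2 : y * a * y = y)
    (hy3 : prime (a * y) = a * y) (hy4 : prime (y * a) = y * a) : y = x := by
  have e1 : (a*x)*(a*y) = a*y := by rw [← mul_assoc' (a*x) a y, hx1]
  have hax : a*y = a*x := by
    calc a*y = prime ((a*x)*(a*y)) := by rw [e1, hy3]
    _ = prime (a*y) * prime (a*x) := prime_mul _ _
    _ = (a*y)*(a*x) := by rw [hy3, hx3]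
    _ = ((a*y)*a)*x := (mul_assoc' _ _ _).symm
    _ = a*x := by rw [hy1]
  have e2 : (x*a)*(y*a) = x*a := by
    rw [mul_assoc' x a (y*a), ← mul_assoc' a y a, hy1]
  have hxa : x*a = y*a := by
    calc x*a = prime ((x*a)*(y*a)) := by rw [e2, hx4]
    _ = prime (y*a) * prime (x*a) := prime_mul _ _
    _ = (y*a)*(x*a) := by rw [hy4, hx4]
    _ = y*((a*x)*a) := by rw [mul_assoc', mul_assoc']
    _ = y*a := by rw [hx1]
  calc y = (y*a)*y := hy2.symm
  _ = (x*a)*y := by rw [hxa]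
  _ = x*(a*y) := mul_assoc' _ _ _
  _ = x*(a*x) := by rw [hax]
  _ = (x*a)*x := (mul_assoc' _ _ _).symm
  _ = x := hx2

lemma mp_exists (a : Cl12) : ∃ x : Cl12, a * x * a = a ∧ x * a * x = x ∧
    prime (a * x) = a * x ∧ prime (x * a) = x * a := by
  by_cases h0 : a = 0
  · subst h0
    exact ⟨0, by rw [mul_zero'], by rw [mul_zero'],
      by rw [mul_zero', prime_zero], by rw [mul_zero', prime_zero]⟩
  by_cases hP : P a = 0
  · -- non-invertible nonzero element
    have hN : N a = 0 := by
      have := hP; rw [P] at this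
      nlinarith [sq_nonneg (N a), sq_nonneg (T a)]
    have hT : T a = 0 := by
      have := hP; rw [P] at this
      nlinarith [sq_nonneg (N a), sq_nonneg (T a)]
    have hs : s a ≠ 0 := by
      intro h
      apply h0
      rw [s] at h
      ext <;> simp [zero_def] <;> nlinarith [sq_nonneg a.x0, sq_nonneg a.x1, sq_nonneg a.x2, sq_nonneg a.x3,
        sq_nonneg a.x4, sq_nonneg a.x5, sq_nonneg a.x6, sq_nonneg a.x7, h]
    have h2s : (2 * s a) ≠ 0 := mul_ne_zero two_ne_zero hs
    set c : ℝ := (2 * s a)⁻¹ with hc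
    have hc2 : c * (2 * s a) = 1 := inv_mul_cancel₀ h2s
    refine ⟨c • prime a, ?_, ?_, ?_, ?_⟩
    · rw [mul_smul', smul_mul, key a hN hT, smul_smul', hc2, one_smul']
    · have key' : prime a * a * prime a = (2 * s a) • prime a := by
        have h := congrArg prime (key a hN hT)
        rw [prime_mul, prime_mul, prime_smul, prime_prime, ← mul_assoc'] at h
        exact h
      rw [smul_mul, smul_mul, mul_smul', key', smul_smul', smul_smul', mul_assoc, hc2, mul_one]
    · rw [mul_smul', prime_smul, prime_mul, prime_prime]
    · rw [smul_mul, prime_smul, prime_mul, prime_prime]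
  · -- invertible element
    set x : Cl12 := conj a * cc (N a / P a) (-(2 * T a) / P a) with hx
    have h1 : N a * (N a / P a) - 2 * T a * (-(2 * T a) / P a) = 1 := by
      field_simp
      rw [P]; ring
    have h2 : N a * (-(2 * T a) / P a) + 2 * T a * (N a / P a) = 0 := by
      field_simp
      ring
    have hax : a * x = 1 := by
      rw [hx, ← mul_assoc', mul_conj, cc_mul_cc, h1, h2]
      rfl
    have hxa : x * a = 1 := by
      rw [hx, mul_assoc', cc_comm, ← mul_assoc', conj_mul, cc_mul_cc, h1, h2]
      rfl
    exact ⟨x, by rw [hax, one_mul'], by rw [hxa, one_mul'],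
      by rw [hax, prime_one], by rw [hxa, prime_one]⟩

end Cl12

theorem mp_exists_unique' (a : Cl12) :
    ∃! x : Cl12, a * x * a = a ∧ x * a * x = x ∧
      Cl12.prime (a * x) = a * x ∧ Cl12.prime (x * a) = x * a := by
  obtain ⟨x, hx1, hx2, hx3, hx4⟩ := Cl12.mp_exists a
  exact ⟨x, ⟨hx1, hx2, hx3, hx4⟩, fun y ⟨hy1, hy2, hy3, hy4⟩ =>
    Cl12.mp_unique a x y hx1 hx2 hx3 hx4 hy1 hy2 hy3 hy4⟩

end Work

/-- Every `a ∈ Cℓ(1,2)` has a unique Moore–Penrose inverse: a unique `x` with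
`axa = a`, `xax = x`, `(ax)' = ax` and `(xa)' = xa`. -/
theorem mp_exists_unique (a : Cl12) :
    ∃! x : Cl12, a * x * a = a ∧ x * a * x = x ∧
      Cl12.prime (a * x) = a * x ∧ Cl12.prime (x * a) = x * a := by
  exact mp_exists_unique' a
end
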